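/- Every pattern in which each occurring variable occurs at least 3 times is 3-avoidable; that is, there exist infinitely many words over a 3-letter alphabet having no factor that is an instance of the pattern. -/

import Mathlib

/-- A word `w` is an instance of the pattern `p` if there is a non-erasing
substitution (equivalently, a non-erasing monoid morphism on free monoids)
sending `p` to `w`. -/
def IsInstance {Δ α : Type*} (p : List Δ) (w : List α) : Prop :=
  ∃ f : Δ → List α, (∀ v, f v ≠ []) ∧ (p.map f).flatten = w

/-- A word `w` avoids the pattern `p` if no factor of `w` is an instance of `p`. -/
def Avoids {Δ α : Type*} (w : List α) (p : List Δ) : Prop :=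
  ∀ x : List α, x <:+: w → ¬ IsInstance p x

/-!
Let `a n` be the number of ternary words of length `n` avoiding `p = z :: q`; we show
`2 a n ≤ a (n + 1)` by strong induction. Of the `3 a n` one-letter extensions of avoiding words
of length `n`, a bad one ends with an instance `h(z) h(q)`, and it is determined by `h` (with
`h z` recorded only through its length) together with its avoiding prefix ending in `h(z)`, of
length `n + 1 - |h(q)|`; by induction there are at most `2 a n / 2 ^ |h(q)|` such prefixes. As `z`
occurs at least twice and every other variable at least three times in `q`, the weights
`2 ^ (-|h(q)|)` sum to at most `(∑ 4⁻ˡ) · ∏ (∑ 3ˡ 8⁻ˡ) ≤ 1/3 · 1`, so there are at most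
`2 a n / 3 ≤ a n` bad extensions. Patterns are first moved to the finite alphabet of their
variables.
-/

open List Function
open scoped Finset

section Patterns

variable {Δ Δ' α : Type*}

lemma not_isInstance_nil {p : List Δ} (hp : p ≠ []) : ¬ IsInstance p ([] : List α) := by
  rintro ⟨f, hf, hfp⟩
  obtain ⟨v, q, rfl⟩ := exists_cons_of_ne_nil hp
  exact hf v (append_eq_nil_iff.1 hfp).1

lemma avoids_nil {p : List Δ} (hp : p ≠ []) : Avoids ([] : List α) p := fun _ hx =>
  eq_nil_of_infix_nil hx ▸ not_isInstance_nil hp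

lemma Avoids.mono {p : List Δ} {w x : List α} (hw : Avoids w p) (hx : x <:+: w) : Avoids x p :=
  fun y hy => hw y (hy.trans hx)

lemma isInstance_map_iff [Nonempty α] {g : Δ' → Δ} (hg : Injective g) {p : List Δ'}
    {x : List α} : IsInstance (p.map g) x ↔ IsInstance p x := by
  constructor
  · rintro ⟨f, hf, rfl⟩
    exact ⟨f ∘ g, fun v => hf (g v), by rw [List.map_map]⟩
  · rintro ⟨f, hf, rfl⟩
    obtain ⟨a⟩ := ‹Nonempty α›
    refine ⟨extend g f fun _ => [a], fun v => ?_, by rw [List.map_map, extend_comp hg]⟩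
    by_cases hv : ∃ u, g u = v
    · obtain ⟨u, rfl⟩ := hv
      rw [hg.extend_apply]
      exact hf u
    · rw [extend_apply' _ _ _ hv]
      exact cons_ne_nil a []

lemma avoids_map_iff [Nonempty α] {g : Δ' → Δ} (hg : Injective g) {p : List Δ'}
    {w : List α} : Avoids w (p.map g) ↔ Avoids w p := by
  simp only [Avoids, isInstance_map_iff hg]

lemma exists_isSuffix_isInstance {p : List Δ} {u : List α} {c : α} (hu : Avoids u p)
    (hc : ¬ Avoids (u ++ [c]) p) : ∃ x, x <:+ u ++ [c] ∧ IsInstance p x := by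
  simp only [Avoids, not_forall, not_not] at hc
  obtain ⟨x, hx, hinst⟩ := hc
  rcases infix_concat_iff.1 hx with hsuf | hinf
  · exact ⟨x, hsuf, hinst⟩
  · exact absurd hinst (hu x hinf)

lemma length_le_length_flatten_map {q : List Δ} {v : Δ} (hv : v ∈ q) (h : Δ → List α) :
    (h v).length ≤ (q.map h).flatten.length :=
  (infix_of_mem_flatten (mem_map_of_mem hv)).length_le

lemma length_flatten_map_congr {q : List Δ} {h₁ h₂ : Δ → List α}
    (H : ∀ v, (h₁ v).length = (h₂ v).length) :
    (q.map h₁).flatten.length = (q.map h₂).flatten.length := by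
  simp only [length_flatten, List.map_map, comp_def, H]

end Patterns

section Words

variable {α Δ : Type*} [Fintype α]

def wordsOfLength (n : ℕ) : Finset (List α) :=
  (Finset.univ : Finset (Fin n → α)).map ⟨List.ofFn, List.ofFn_injective⟩

lemma mem_wordsOfLength {n : ℕ} {w : List α} : w ∈ wordsOfLength n ↔ w.length = n := by
  simp only [wordsOfLength, Finset.mem_map, Finset.mem_univ, true_and, Embedding.coeFn_mk]
  constructor
  · rintro ⟨f, rfl⟩
    exact length_ofFn
  · rintro rfl
    exact ⟨w.get, ofFn_get w⟩

lemma card_wordsOfLength (n : ℕ) : #(wordsOfLength n : Finset (List α)) = Fintype.card α ^ n := by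
  simp [wordsOfLength]

lemma sum_pow_length_biUnion_wordsOfLength [DecidableEq α] {R : Type*} [CommSemiring R]
    (N : Finset ℕ) (x : R) :
    ∑ s ∈ N.biUnion (wordsOfLength (α := α)), x ^ s.length = ∑ ℓ ∈ N, (Fintype.card α * x) ^ ℓ := by
  rw [Finset.sum_biUnion]
  · refine Finset.sum_congr rfl fun ℓ _ => ?_
    rw [Finset.sum_congr rfl fun s hs => by rw [mem_wordsOfLength.1 hs], Finset.sum_const,
      card_wordsOfLength, nsmul_eq_mul, mul_pow]
    push_cast
    ring
  · intro i _ j _ hij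
    exact Finset.disjoint_left.2 fun s hi hj =>
      hij ((mem_wordsOfLength.1 hi).symm.trans (mem_wordsOfLength.1 hj))

open scoped Classical in
noncomputable def avoidingWords (p : List Δ) (n : ℕ) : Finset (List α) :=
  (wordsOfLength n).filter (Avoids · p)

lemma mem_avoidingWords {p : List Δ} {n : ℕ} {w : List α} :
    w ∈ avoidingWords p n ↔ w.length = n ∧ Avoids w p := by
  simp [avoidingWords, mem_wordsOfLength]

variable [DecidableEq α]

noncomputable def badExtensions (p : List Δ) (n : ℕ) : Finset (List α) :=
  open scoped Classical in
  ((avoidingWords p n ×ˢ Finset.univ).image fun uc => uc.1 ++ [uc.2]).filter (¬ Avoids · p)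

lemma mem_badExtensions {p : List Δ} {n : ℕ} {w : List α} :
    w ∈ badExtensions p n ↔ (∃ u ∈ avoidingWords p n, ∃ c, u ++ [c] = w) ∧ ¬ Avoids w p := by
  simp [badExtensions]

lemma card_mul_card_avoidingWords_le (p : List Δ) (n : ℕ) :
    Fintype.card α * #(avoidingWords p n : Finset (List α)) ≤
      #(avoidingWords p (n + 1) : Finset (List α)) + #(badExtensions p n : Finset (List α)) := by
  classical
  set E := (avoidingWords p n ×ˢ Finset.univ).image fun uc : List α × α => uc.1 ++ [uc.2]
  have hE : #E = Fintype.card α * #(avoidingWords p n : Finset (List α)) := by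
    rw [Finset.card_image_of_injective, Finset.card_product, Finset.card_univ, mul_comm]
    rintro ⟨u, c⟩ ⟨u', c'⟩ h
    obtain ⟨rfl, hc⟩ := append_inj' h rfl
    simp_all
  have hgood : E.filter (Avoids · p) ⊆ avoidingWords p (n + 1) := by
    intro w hw
    obtain ⟨hw, hav⟩ := Finset.mem_filter.1 hw
    obtain ⟨⟨u, c⟩, huc, rfl⟩ := Finset.mem_image.1 hw
    simp_all [mem_avoidingWords]
  rw [← hE, ← Finset.card_filter_add_card_filter_not (Avoids · p)]
  exact add_le_add (Finset.card_le_card hgood) (by simp [badExtensions, E])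

lemma exists_decomposition_of_mem_badExtensions {z : Δ} {q : List Δ} (hq : q ≠ []) {n : ℕ}
    {w : List α} (hw : w ∈ badExtensions (z :: q) n) :
    ∃ (h : Δ → List α) (t : List α), (∀ v, h v ≠ []) ∧
      (q.map h).flatten.length ∈ Finset.Icc 1 n ∧
      t ++ h z ∈ avoidingWords (z :: q) (n + 1 - (q.map h).flatten.length) ∧
      t ++ h z ++ (q.map h).flatten = w := by
  obtain ⟨⟨u, hu, c, rfl⟩, hbad⟩ := mem_badExtensions.1 hw
  obtain ⟨hlen, hu⟩ := mem_avoidingWords.1 hu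
  obtain ⟨x, ⟨t, ht⟩, h, hh, rfl⟩ := exists_isSuffix_isInstance hu hbad
  simp only [map_cons, flatten_cons, ← append_assoc] at ht
  have hr : 1 ≤ (q.map h).flatten.length := by
    obtain ⟨v, q', rfl⟩ := exists_cons_of_ne_nil hq
    exact (length_pos_iff.2 (hh v)).trans_le (length_le_length_flatten_map mem_cons_self h)
  have hsum : (t ++ h z).length + (q.map h).flatten.length = n + 1 := by
    rw [← length_append, ht, length_append, hlen, length_singleton]
  have hz : (h z).length ≤ (t ++ h z).length := (suffix_append t (h z)).length_le
  have hz_pos := length_pos_iff.2 (hh z)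
  have hpre : t ++ h z <+: u :=
    prefix_of_prefix_length_le ⟨_, ht⟩ (prefix_append u [c]) (by omega)
  exact ⟨h, t, hh, Finset.mem_Icc.2 ⟨hr, by omega⟩,
    mem_avoidingWords.2 ⟨by omega, hu.mono hpre.isInfix⟩, ht⟩

end Words

section Growth

lemma pow_mul_le_of_two_mul_le {a : ℕ → ℕ} {n : ℕ} (ha : ∀ m < n, 2 * a m ≤ a (m + 1)) :
    ∀ j ≤ n, 2 ^ j * a (n - j) ≤ a n
  | 0, _ => by simp
  | j + 1, hj => calc
      2 ^ (j + 1) * a (n - (j + 1)) = 2 ^ j * (2 * a (n - (j + 1))) := by ring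
      _ ≤ 2 ^ j * a (n - j) := by
        have := ha (n - (j + 1)) (by omega)
        rw [show n - (j + 1) + 1 = n - j by omega] at this
        gcongr
      _ ≤ a n := pow_mul_le_of_two_mul_le ha j (by omega)

lemma le_two_mul_mul_half_pow {a : ℕ → ℕ} {n k : ℕ} (ha : ∀ m < n, 2 * a m ≤ a (m + 1))
    (hk : k ∈ Finset.Icc 1 (n + 1)) : (a (n + 1 - k) : ℝ) ≤ 2 * a n * (1 / 2) ^ k := by
  obtain ⟨j, rfl⟩ : ∃ j, k = j + 1 := ⟨k - 1, by grind⟩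
  have hj : 2 ^ j * a (n - j) ≤ a n :=
    pow_mul_le_of_two_mul_le ha j (by grind)
  rw [show n + 1 - (j + 1) = n - j by omega]
  have hj' : (2 : ℝ) ^ j * a (n - j) ≤ a n := by exact_mod_cast hj
  rw [← le_div_iff₀' (by positivity)] at hj'
  calc (a (n - j) : ℝ) ≤ a n / 2 ^ j := hj'
    _ = 2 * a n * (1 / 2) ^ (j + 1) := by rw [one_div_pow, pow_succ]; field_simp

lemma sum_Icc_pow_le {x y : ℝ} (hx : 0 ≤ x) (hxy : x ≤ y) (hy : y < 1) (n : ℕ) :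
    ∑ ℓ ∈ Finset.Icc 1 n, x ^ ℓ ≤ y / (1 - y) :=
  calc ∑ ℓ ∈ Finset.Icc 1 n, x ^ ℓ ≤ ∑ ℓ ∈ Finset.Ico 1 (n + 1), y ^ ℓ := by
        rw [Finset.Ico_add_one_right_eq_Icc]
        exact Finset.sum_le_sum fun ℓ _ => pow_le_pow_left₀ hx hxy ℓ
    _ ≤ y ^ 1 / (1 - y) := geom_sum_Ico_le_of_lt_one (hx.trans hxy) hy
    _ = y / (1 - y) := by rw [pow_one]

end Growth

section Coding

variable {Δ α : Type*} [DecidableEq Δ]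

lemma length_flatten_map_eq_sum_count [Fintype Δ] (q : List Δ) (h : Δ → List α) :
    (q.map h).flatten.length = ∑ v, q.count v * (h v).length := by
  rw [length_flatten, List.map_map, Finset.sum_list_map_count]
  refine Finset.sum_subset (Finset.subset_univ _) fun v _ hv => ?_
  rw [count_eq_zero.2 (mt mem_toFinset.2 hv), zero_smul]

lemma mem_of_three_le_count_cons {z v : Δ} {q : List Δ} (h : 3 ≤ (z :: q).count v) : v ∈ q := by
  rw [← count_pos_iff]
  rw [count_cons] at h
  split_ifs at h <;> omega

def reconstruct (z : Δ) (q : List Δ) (h : Δ → List α) (t : List α) : List α :=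
  t ++ (q.map (update h z (t.rtake (h z).length))).flatten

lemma reconstruct_update_replicate (z : Δ) (q : List Δ) (h : Δ → List α) (t : List α) (a : α) :
    reconstruct z q (update h z (replicate (h z).length a)) (t ++ h z) =
      t ++ h z ++ (q.map h).flatten := by
  have hlast : (t ++ h z).rtake (h z).length = h z := by simp [rtake]
  simp only [reconstruct, update_self, length_replicate, hlast, update_idem, update_eq_self]

end Coding

section Counting

variable {Δ : Type*} [Fintype Δ] [DecidableEq Δ]

/-- The image of `z` is coded only by its length, as a block of `0`s, since `reconstruct` reads it
off the prefix; this makes its weight geometric in the length rather than in the number of words. -/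
def substitutionCodes (z : Δ) (n : ℕ) : Finset (Δ → List (Fin 3)) :=
  Fintype.piFinset fun v => if v = z then (Finset.Icc 1 n).image (replicate · 0)
    else (Finset.Icc 1 n).biUnion wordsOfLength

lemma sum_substitutionCodes_le {z : Δ} {q : List Δ} (hocc : ∀ v, 3 ≤ (z :: q).count v) (n : ℕ) :
    ∑ h ∈ substitutionCodes z n, (1 / 2 : ℝ) ^ (q.map h).flatten.length ≤ 1 / 3 := by
  set ρ : Δ → ℝ := fun v => (1 / 2) ^ q.count v
  have hρ (h : Δ → List (Fin 3)) :
      (1 / 2 : ℝ) ^ (q.map h).flatten.length = ∏ v, ρ v ^ (h v).length := by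
    simp only [length_flatten_map_eq_sum_count, ρ, ← pow_mul, Finset.prod_pow_eq_pow_sum]
  have hρz : ρ z ≤ 1 / 4 := by
    have := hocc z
    rw [count_cons_self] at this
    calc ρ z ≤ (1 / 2) ^ 2 := pow_le_pow_of_le_one (by norm_num) (by norm_num) (by omega)
      _ = 1 / 4 := by norm_num
  have hρv (v : Δ) (hv : v ≠ z) : 3 * ρ v ≤ 3 / 8 := by
    have := hocc v
    rw [count_cons_of_ne (Ne.symm hv)] at this
    calc 3 * ρ v ≤ 3 * (1 / 2) ^ 3 := by
          gcongr
          exact pow_le_pow_of_le_one (by norm_num) (by norm_num) this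
      _ = 3 / 8 := by norm_num
  have hz : ∑ s ∈ (Finset.Icc 1 n).image (replicate · (0 : Fin 3)), ρ z ^ s.length ≤ 1 / 3 := by
    rw [Finset.sum_image fun _ _ _ _ h => replicate_left_injective _ h]
    simp only [length_replicate]
    exact (sum_Icc_pow_le (by positivity) hρz (by norm_num) n).trans_eq (by norm_num)
  have hv (v : Δ) (hv : v ≠ z) :
      ∑ s ∈ (Finset.Icc 1 n).biUnion (wordsOfLength (α := Fin 3)), ρ v ^ s.length ≤ 1 := by
    rw [sum_pow_length_biUnion_wordsOfLength, Fintype.card_fin, Nat.cast_ofNat]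
    exact (sum_Icc_pow_le (by positivity) (hρv v hv) (by norm_num) n).trans (by norm_num)
  rw [Finset.sum_congr rfl fun h _ => hρ h, substitutionCodes,
    ← Finset.prod_univ_sum (f := fun v (s : List (Fin 3)) => ρ v ^ s.length),
    Fintype.prod_eq_mul_prod_compl z, if_pos rfl]
  have hsum_nonneg (v : Δ) (S : Finset (List (Fin 3))) : 0 ≤ ∑ s ∈ S, ρ v ^ s.length :=
    Finset.sum_nonneg fun _ _ => by positivity
  refine (mul_le_mul hz (Finset.prod_le_one (fun _ _ => hsum_nonneg _ _) fun v hv' => ?_)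
    (Finset.prod_nonneg fun _ _ => hsum_nonneg _ _) (by norm_num)).trans_eq (mul_one _)
  have hvz : v ≠ z := fun h => Finset.mem_compl.1 hv' (Finset.mem_singleton.2 h)
  rw [if_neg hvz]
  exact hv v hvz

noncomputable def instanceCodes (z : Δ) (q : List Δ) (n : ℕ) :
    Finset ((_ : Δ → List (Fin 3)) × List (Fin 3)) :=
  ((substitutionCodes z n).filter fun h => (q.map h).flatten.length ∈ Finset.Icc 1 n).sigma
    fun h => avoidingWords (z :: q) (n + 1 - (q.map h).flatten.length)

lemma badExtensions_subset_image_reconstruct {z : Δ} {q : List Δ}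
    (hocc : ∀ v, 3 ≤ (z :: q).count v) (n : ℕ) :
    badExtensions (z :: q) n ⊆ (instanceCodes z q n).image fun c => reconstruct z q c.1 c.2 := by
  intro w hw
  have hq : ∀ v, v ∈ q := fun v => mem_of_three_le_count_cons (hocc v)
  obtain ⟨h, t, hh, hlen, ht, rfl⟩ :=
    exists_decomposition_of_mem_badExtensions (ne_nil_of_mem (hq z)) hw
  set h' := update h z (replicate (h z).length 0)
  have hlen' : (q.map h').flatten.length = (q.map h).flatten.length := by
    refine length_flatten_map_congr fun v => ?_
    by_cases hv : v = z
    · subst hv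
      simp [h']
    · simp [h', hv]
  have hbound (v : Δ) : (h v).length ∈ Finset.Icc 1 n :=
    Finset.mem_Icc.2 ⟨length_pos_iff.2 (hh v),
      (length_le_length_flatten_map (hq v) h).trans (Finset.mem_Icc.1 hlen).2⟩
  have hcode : h' ∈ substitutionCodes z n := by
    refine Fintype.mem_piFinset.2 fun v => ?_
    by_cases hv : v = z
    · subst hv
      simp only [h', update_self, if_pos]
      exact Finset.mem_image.2 ⟨_, hbound v, rfl⟩
    · simpa [h', hv, mem_wordsOfLength] using hbound v
  refine Finset.mem_image.2 ⟨⟨h', t ++ h z⟩, Finset.mem_sigma.2 ⟨?_, ?_⟩,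
    reconstruct_update_replicate z q h t 0⟩
  · exact Finset.mem_filter.2 ⟨hcode, hlen' ▸ hlen⟩
  · exact hlen' ▸ ht

lemma card_badExtensions_le {z : Δ} {q : List Δ} (hocc : ∀ v, 3 ≤ (z :: q).count v) {n : ℕ}
    (hdouble : ∀ m < n, 2 * #(avoidingWords (α := Fin 3) (z :: q) m) ≤
      #(avoidingWords (α := Fin 3) (z :: q) (m + 1))) :
    #(badExtensions (α := Fin 3) (z :: q) n) ≤ #(avoidingWords (α := Fin 3) (z :: q) n) := by
  set a : ℕ → ℕ := fun m => #(avoidingWords (α := Fin 3) (z :: q) m)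
  set D := (substitutionCodes z n).filter fun h => (q.map h).flatten.length ∈ Finset.Icc 1 n
  have hcard : #(badExtensions (α := Fin 3) (z :: q) n) ≤ #(instanceCodes z q n) :=
    (Finset.card_le_card (badExtensions_subset_image_reconstruct hocc n)).trans
      Finset.card_image_le
  have hcodes : (#(instanceCodes z q n) : ℝ) ≤ a n :=
    calc (#(instanceCodes z q n) : ℝ)
      _ = ∑ h ∈ D, (a (n + 1 - (q.map h).flatten.length) : ℝ) := by
        rw [instanceCodes, Finset.card_sigma]
        push_cast
        rfl
      _ ≤ ∑ h ∈ D, 2 * a n * (1 / 2 : ℝ) ^ (q.map h).flatten.length :=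
        Finset.sum_le_sum fun h hD => le_two_mul_mul_half_pow hdouble
          (Finset.Icc_subset_Icc_right n.le_succ (Finset.mem_filter.1 hD).2)
      _ ≤ 2 * a n * ∑ h ∈ substitutionCodes z n, (1 / 2 : ℝ) ^ (q.map h).flatten.length := by
        rw [← Finset.mul_sum]
        gcongr
        exact Finset.filter_subset _ _
      _ ≤ 2 * a n * (1 / 3) := by gcongr; exact sum_substitutionCodes_le hocc n
      _ ≤ a n := by linarith [(a n).cast_nonneg (α := ℝ)]
  exact hcard.trans (mod_cast hcodes)

lemma two_mul_card_avoidingWords_le {z : Δ} {q : List Δ} (hocc : ∀ v, 3 ≤ (z :: q).count v)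
    (n : ℕ) : 2 * #(avoidingWords (α := Fin 3) (z :: q) n) ≤
      #(avoidingWords (α := Fin 3) (z :: q) (n + 1)) := by
  induction n using Nat.strong_induction_on with
  | _ n ih =>
    have hext := card_mul_card_avoidingWords_le (α := Fin 3) (z :: q) n
    rw [Fintype.card_fin] at hext
    have hbad := card_badExtensions_le hocc ih
    omega

theorem infinite_setOf_avoids_of_forall_three_le_count {p : List Δ} (hp : p ≠ [])
    (hocc : ∀ v, 3 ≤ p.count v) : {w : List (Fin 3) | Avoids w p}.Infinite := by
  obtain ⟨z, q, rfl⟩ := exists_cons_of_ne_nil hp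
  have hne (n : ℕ) : (avoidingWords (α := Fin 3) (z :: q) n).Nonempty := by
    induction n with
    | zero => exact ⟨[], mem_avoidingWords.2 ⟨rfl, avoids_nil hp⟩⟩
    | succ n ih =>
      have := two_mul_card_avoidingWords_le hocc n
      exact Finset.card_pos.1 (by have := ih.card_pos; omega)
  refine Set.Infinite.of_image length (Set.infinite_univ.mono fun n _ => ?_)
  obtain ⟨w, hw⟩ := hne n
  exact ⟨w, (mem_avoidingWords.1 hw).2, (mem_avoidingWords.1 hw).1⟩

end Counting

/-- Every pattern in which each occurring variable occurs at least 3 times is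
3-avoidable. -/
theorem avoid_three_of_occurrences {Δ : Type*} [DecidableEq Δ]
    (p : List Δ) (hp : p ≠ []) (hocc : ∀ v ∈ p, 3 ≤ p.count v) :
    {w : List (Fin 3) | Avoids w p}.Infinite := by
  have hinf : {w : List (Fin 3) | Avoids w p.attach}.Infinite :=
    infinite_setOf_avoids_of_forall_three_le_count (by simpa using hp)
      fun v => by
        -- `count_attach` is stated for `Subtype.instBEq`, not the `BEq` of a `DecidableEq`
        convert hocc v v.2 using 1
        convert count_attach
  simpa only [← avoids_map_iff Subtype.val_injective, attach_map_subtype_val] using hinf
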